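/- arXiv:2411.06595 — 6 statements merged into one kernel-verified Lean document; each statement's English description precedes it below -/
import Mathlib

section
/- If the fields B, E : ℝ × ℝ³ → ℝ³ and φ, ψ : ℝ × ℝ³ → ℝ are smooth solutions of the Maxwell-GLM system ∂ₜB + c₀ ∇×E + c_h ∇φ = 0, ∂ₜφ + c_h ∇·B = 0, ∂ₜE − c₀ ∇×B + c_h ∇ψ = 0, ∂ₜψ + c_h ∇·E = 0, then the total energy density 𝓔 = ½(‖E‖² + ‖B‖²) + ½(ψ² + φ²) satisfies the conservation law ∂ₜ𝓔 + ∇·(c₀ E × B + c_h(ψ E + φ B)) = 0. -/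
/-- Partial derivative in time of a field `f(t,x,y,z)`. -/
noncomputable def pt (f : ℝ → ℝ → ℝ → ℝ → ℝ) (t x y z : ℝ) : ℝ :=
  deriv (fun s => f s x y z) t

/-- Partial derivative in `x`. -/
noncomputable def px (f : ℝ → ℝ → ℝ → ℝ → ℝ) (t x y z : ℝ) : ℝ :=
  deriv (fun s => f t s y z) x

/-- Partial derivative in `y`. -/
noncomputable def py (f : ℝ → ℝ → ℝ → ℝ → ℝ) (t x y z : ℝ) : ℝ :=
  deriv (fun s => f t x s z) y

/-- Partial derivative in `z`. -/
noncomputable def pz (f : ℝ → ℝ → ℝ → ℝ → ℝ) (t x y z : ℝ) : ℝ :=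
  deriv (fun s => f t x y s) z

/-- Smoothness of a field of four real variables. -/
def Smooth4 (f : ℝ → ℝ → ℝ → ℝ → ℝ) : Prop :=
  ContDiff ℝ (⊤ : ℕ∞) (fun p : ℝ × ℝ × ℝ × ℝ => f p.1 p.2.1 p.2.2.1 p.2.2.2)


section helpers

lemma smooth4_hasDerivAt_t {f : ℝ → ℝ → ℝ → ℝ → ℝ} (hf : Smooth4 f)
    (t x y z : ℝ) : HasDerivAt (fun s => f s x y z) (pt f t x y z) t := by
  have hd : Differentiable ℝ (fun s : ℝ => f s x y z) := by
    have hc : ContDiff ℝ (⊤ : ℕ∞) (fun s : ℝ => ((s, x, y, z) : ℝ × ℝ × ℝ × ℝ)) := by fun_prop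
    exact (hf.comp hc).differentiable (by simp)
  exact (hd t).hasDerivAt

lemma smooth4_hasDerivAt_x {f : ℝ → ℝ → ℝ → ℝ → ℝ} (hf : Smooth4 f)
    (t x y z : ℝ) : HasDerivAt (fun s => f t s y z) (px f t x y z) x := by
  have hd : Differentiable ℝ (fun s : ℝ => f t s y z) := by
    have hc : ContDiff ℝ (⊤ : ℕ∞) (fun s : ℝ => ((t, s, y, z) : ℝ × ℝ × ℝ × ℝ)) := by fun_prop
    exact (hf.comp hc).differentiable (by simp)
  exact (hd x).hasDerivAt

lemma smooth4_hasDerivAt_y {f : ℝ → ℝ → ℝ → ℝ → ℝ} (hf : Smooth4 f)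
    (t x y z : ℝ) : HasDerivAt (fun s => f t x s z) (py f t x y z) y := by
  have hd : Differentiable ℝ (fun s : ℝ => f t x s z) := by
    have hc : ContDiff ℝ (⊤ : ℕ∞) (fun s : ℝ => ((t, x, s, z) : ℝ × ℝ × ℝ × ℝ)) := by fun_prop
    exact (hf.comp hc).differentiable (by simp)
  exact (hd y).hasDerivAt

lemma smooth4_hasDerivAt_z {f : ℝ → ℝ → ℝ → ℝ → ℝ} (hf : Smooth4 f)
    (t x y z : ℝ) : HasDerivAt (fun s => f t x y s) (pz f t x y z) z := by
  have hd : Differentiable ℝ (fun s : ℝ => f t x y s) := by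
    have hc : ContDiff ℝ (⊤ : ℕ∞) (fun s : ℝ => ((t, x, y, s) : ℝ × ℝ × ℝ × ℝ)) := by fun_prop
    exact (hf.comp hc).differentiable (by simp)
  exact (hd z).hasDerivAt

end helpers

/-- energy conservation law for smooth solutions of the Maxwell-GLM system. -/
theorem maxwell_glm_energy_conservation
    (c0 ch : ℝ) (hc0 : 0 < c0) (hch : 0 < ch)
    (B1 B2 B3 E1 E2 E3 φ ψ : ℝ → ℝ → ℝ → ℝ → ℝ)
    (hB1 : Smooth4 B1) (hB2 : Smooth4 B2) (hB3 : Smooth4 B3)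
    (hE1 : Smooth4 E1) (hE2 : Smooth4 E2) (hE3 : Smooth4 E3)
    (hφ : Smooth4 φ) (hψ : Smooth4 ψ)
    -- ∂ₜB + c₀ ∇×E + c_h ∇φ = 0
    (eqB1 : ∀ t x y z, pt B1 t x y z + c0 * (py E3 t x y z - pz E2 t x y z)
        + ch * px φ t x y z = 0)
    (eqB2 : ∀ t x y z, pt B2 t x y z + c0 * (pz E1 t x y z - px E3 t x y z)
        + ch * py φ t x y z = 0)
    (eqB3 : ∀ t x y z, pt B3 t x y z + c0 * (px E2 t x y z - py E1 t x y z)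
        + ch * pz φ t x y z = 0)
    -- ∂ₜφ + c_h ∇·B = 0
    (eqφ : ∀ t x y z, pt φ t x y z
        + ch * (px B1 t x y z + py B2 t x y z + pz B3 t x y z) = 0)
    -- ∂ₜE − c₀ ∇×B + c_h ∇ψ = 0
    (eqE1 : ∀ t x y z, pt E1 t x y z - c0 * (py B3 t x y z - pz B2 t x y z)
        + ch * px ψ t x y z = 0)
    (eqE2 : ∀ t x y z, pt E2 t x y z - c0 * (pz B1 t x y z - px B3 t x y z)
        + ch * py ψ t x y z = 0)
    (eqE3 : ∀ t x y z, pt E3 t x y z - c0 * (px B2 t x y z - py B1 t x y z)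
        + ch * pz ψ t x y z = 0)
    -- ∂ₜψ + c_h ∇·E = 0
    (eqψ : ∀ t x y z, pt ψ t x y z
        + ch * (px E1 t x y z + py E2 t x y z + pz E3 t x y z) = 0)
    -- total energy density and energy flux
    (En : ℝ → ℝ → ℝ → ℝ → ℝ)
    (hEn : ∀ t x y z, En t x y z =
      (1/2) * (E1 t x y z ^ 2 + E2 t x y z ^ 2 + E3 t x y z ^ 2
             + B1 t x y z ^ 2 + B2 t x y z ^ 2 + B3 t x y z ^ 2)
      + (1/2) * (ψ t x y z ^ 2 + φ t x y z ^ 2))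
    (S1 S2 S3 : ℝ → ℝ → ℝ → ℝ → ℝ)
    (hS1 : ∀ t x y z, S1 t x y z =
      c0 * (E2 t x y z * B3 t x y z - E3 t x y z * B2 t x y z)
      + ch * (ψ t x y z * E1 t x y z + φ t x y z * B1 t x y z))
    (hS2 : ∀ t x y z, S2 t x y z =
      c0 * (E3 t x y z * B1 t x y z - E1 t x y z * B3 t x y z)
      + ch * (ψ t x y z * E2 t x y z + φ t x y z * B2 t x y z))
    (hS3 : ∀ t x y z, S3 t x y z =
      c0 * (E1 t x y z * B2 t x y z - E2 t x y z * B1 t x y z)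
      + ch * (ψ t x y z * E3 t x y z + φ t x y z * B3 t x y z)) :
    ∀ t x y z, pt En t x y z + (px S1 t x y z + py S2 t x y z + pz S3 t x y z) = 0 := by
  intro t x y z
  -- time-derivative HasDerivAt facts
  have tE1 := smooth4_hasDerivAt_t hE1 t x y z
  have tE2 := smooth4_hasDerivAt_t hE2 t x y z
  have tE3 := smooth4_hasDerivAt_t hE3 t x y z
  have tB1 := smooth4_hasDerivAt_t hB1 t x y z
  have tB2 := smooth4_hasDerivAt_t hB2 t x y z
  have tB3 := smooth4_hasDerivAt_t hB3 t x y z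
  have tψ := smooth4_hasDerivAt_t hψ t x y z
  have tφ := smooth4_hasDerivAt_t hφ t x y z
  have xE1 := smooth4_hasDerivAt_x hE1 t x y z
  have xE2 := smooth4_hasDerivAt_x hE2 t x y z
  have xE3 := smooth4_hasDerivAt_x hE3 t x y z
  have xB1 := smooth4_hasDerivAt_x hB1 t x y z
  have xB2 := smooth4_hasDerivAt_x hB2 t x y z
  have xB3 := smooth4_hasDerivAt_x hB3 t x y z
  have xψ := smooth4_hasDerivAt_x hψ t x y z
  have xφ := smooth4_hasDerivAt_x hφ t x y z
  have yE1 := smooth4_hasDerivAt_y hE1 t x y z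
  have yE2 := smooth4_hasDerivAt_y hE2 t x y z
  have yE3 := smooth4_hasDerivAt_y hE3 t x y z
  have yB1 := smooth4_hasDerivAt_y hB1 t x y z
  have yB2 := smooth4_hasDerivAt_y hB2 t x y z
  have yB3 := smooth4_hasDerivAt_y hB3 t x y z
  have yψ := smooth4_hasDerivAt_y hψ t x y z
  have yφ := smooth4_hasDerivAt_y hφ t x y z
  have zE1 := smooth4_hasDerivAt_z hE1 t x y z
  have zE2 := smooth4_hasDerivAt_z hE2 t x y z
  have zE3 := smooth4_hasDerivAt_z hE3 t x y z
  have zB1 := smooth4_hasDerivAt_z hB1 t x y z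
  have zB2 := smooth4_hasDerivAt_z hB2 t x y z
  have zB3 := smooth4_hasDerivAt_z hB3 t x y z
  have zψ := smooth4_hasDerivAt_z hψ t x y z
  have zφ := smooth4_hasDerivAt_z hφ t x y z
  -- ∂ₜ En
  have e0 : pt En t x y z =
      E1 t x y z * pt E1 t x y z + E2 t x y z * pt E2 t x y z
      + E3 t x y z * pt E3 t x y z + B1 t x y z * pt B1 t x y z
      + B2 t x y z * pt B2 t x y z + B3 t x y z * pt B3 t x y z
      + ψ t x y z * pt ψ t x y z + φ t x y z * pt φ t x y z := by
    have heq : (fun s => En s x y z) = fun s =>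
        (1/2) * (E1 s x y z ^ 2 + E2 s x y z ^ 2 + E3 s x y z ^ 2
          + B1 s x y z ^ 2 + B2 s x y z ^ 2 + B3 s x y z ^ 2)
        + (1/2) * (ψ s x y z ^ 2 + φ s x y z ^ 2) :=
      funext fun s => hEn s x y z
    have H : HasDerivAt (fun s => En s x y z)
        ((1/2 : ℝ) * (2 * E1 t x y z ^ 1 * pt E1 t x y z + 2 * E2 t x y z ^ 1 * pt E2 t x y z
          + 2 * E3 t x y z ^ 1 * pt E3 t x y z + 2 * B1 t x y z ^ 1 * pt B1 t x y z
          + 2 * B2 t x y z ^ 1 * pt B2 t x y z + 2 * B3 t x y z ^ 1 * pt B3 t x y z)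
        + (1/2 : ℝ) * (2 * ψ t x y z ^ 1 * pt ψ t x y z + 2 * φ t x y z ^ 1 * pt φ t x y z)) t := by
      rw [heq]
      exact ((tE1.pow 2).add (tE2.pow 2) |>.add (tE3.pow 2) |>.add (tB1.pow 2)
        |>.add (tB2.pow 2) |>.add (tB3.pow 2) |>.const_mul (1/2 : ℝ)).add
        ((tψ.pow 2).add (tφ.pow 2) |>.const_mul (1/2 : ℝ))
    have := H.deriv
    unfold pt at this ⊢
    rw [this]; ring
  -- px S1
  have e1 : px S1 t x y z =
      c0 * (px E2 t x y z * B3 t x y z + E2 t x y z * px B3 t x y z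
        - (px E3 t x y z * B2 t x y z + E3 t x y z * px B2 t x y z))
      + ch * (px ψ t x y z * E1 t x y z + ψ t x y z * px E1 t x y z
        + (px φ t x y z * B1 t x y z + φ t x y z * px B1 t x y z)) := by
    have heq : (fun s => S1 t s y z) = fun s =>
        c0 * (E2 t s y z * B3 t s y z - E3 t s y z * B2 t s y z)
        + ch * (ψ t s y z * E1 t s y z + φ t s y z * B1 t s y z) :=
      funext fun s => hS1 t s y z
    have H : HasDerivAt (fun s => S1 t s y z)
        (c0 * (px E2 t x y z * B3 t x y z + E2 t x y z * px B3 t x y z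
          - (px E3 t x y z * B2 t x y z + E3 t x y z * px B2 t x y z))
        + ch * (px ψ t x y z * E1 t x y z + ψ t x y z * px E1 t x y z
          + (px φ t x y z * B1 t x y z + φ t x y z * px B1 t x y z))) x := by
      rw [heq]
      exact (((xE2.mul xB3).sub (xE3.mul xB2)).const_mul c0).add
        (((xψ.mul xE1).add (xφ.mul xB1)).const_mul ch)
    exact H.deriv
  -- py S2
  have e2 : py S2 t x y z =
      c0 * (py E3 t x y z * B1 t x y z + E3 t x y z * py B1 t x y z
        - (py E1 t x y z * B3 t x y z + E1 t x y z * py B3 t x y z))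
      + ch * (py ψ t x y z * E2 t x y z + ψ t x y z * py E2 t x y z
        + (py φ t x y z * B2 t x y z + φ t x y z * py B2 t x y z)) := by
    have heq : (fun s => S2 t x s z) = fun s =>
        c0 * (E3 t x s z * B1 t x s z - E1 t x s z * B3 t x s z)
        + ch * (ψ t x s z * E2 t x s z + φ t x s z * B2 t x s z) :=
      funext fun s => hS2 t x s z
    have H : HasDerivAt (fun s => S2 t x s z)
        (c0 * (py E3 t x y z * B1 t x y z + E3 t x y z * py B1 t x y z
          - (py E1 t x y z * B3 t x y z + E1 t x y z * py B3 t x y z))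
        + ch * (py ψ t x y z * E2 t x y z + ψ t x y z * py E2 t x y z
          + (py φ t x y z * B2 t x y z + φ t x y z * py B2 t x y z))) y := by
      rw [heq]
      exact (((yE3.mul yB1).sub (yE1.mul yB3)).const_mul c0).add
        (((yψ.mul yE2).add (yφ.mul yB2)).const_mul ch)
    exact H.deriv
  -- pz S3
  have e3 : pz S3 t x y z =
      c0 * (pz E1 t x y z * B2 t x y z + E1 t x y z * pz B2 t x y z
        - (pz E2 t x y z * B1 t x y z + E2 t x y z * pz B1 t x y z))
      + ch * (pz ψ t x y z * E3 t x y z + ψ t x y z * pz E3 t x y z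
        + (pz φ t x y z * B3 t x y z + φ t x y z * pz B3 t x y z)) := by
    have heq : (fun s => S3 t x y s) = fun s =>
        c0 * (E1 t x y s * B2 t x y s - E2 t x y s * B1 t x y s)
        + ch * (ψ t x y s * E3 t x y s + φ t x y s * B3 t x y s) :=
      funext fun s => hS3 t x y s
    have H : HasDerivAt (fun s => S3 t x y s)
        (c0 * (pz E1 t x y z * B2 t x y z + E1 t x y z * pz B2 t x y z
          - (pz E2 t x y z * B1 t x y z + E2 t x y z * pz B1 t x y z))
        + ch * (pz ψ t x y z * E3 t x y z + ψ t x y z * pz E3 t x y z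
          + (pz φ t x y z * B3 t x y z + φ t x y z * pz B3 t x y z))) z := by
      rw [heq]
      exact (((zE1.mul zB2).sub (zE2.mul zB1)).const_mul c0).add
        (((zψ.mul zE3).add (zφ.mul zB3)).const_mul ch)
    exact H.deriv
  rw [e0, e1, e2, e3]
  linear_combination E1 t x y z * eqE1 t x y z + E2 t x y z * eqE2 t x y z
    + E3 t x y z * eqE3 t x y z + B1 t x y z * eqB1 t x y z
    + B2 t x y z * eqB2 t x y z + B3 t x y z * eqB3 t x y z
    + ψ t x y z * eqψ t x y z + φ t x y z * eqφ t x y z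
end

section
/- For any unit vector n = (n₁,n₂,n₃) ∈ ℝ³, the matrix n₁H₁ + n₂H₂ + n₃H₃ of the Maxwell-GLM system is symmetric and has all real eigenvalues contained in {−c_h, −c₀, c₀, c_h}. -/
open Matrix

def H1 (c0 ch : ℝ) : Matrix (Fin 8) (Fin 8) ℝ :=
  !![0,  0,  0,  ch, 0,  0,  0,  0;
     0,  0,  0,  0,  0,  0, -c0, 0;
     0,  0,  0,  0,  0,  c0, 0,  0;
     ch, 0,  0,  0,  0,  0,  0,  0;
     0,  0,  0,  0,  0,  0,  0,  ch;
     0,  0,  c0, 0,  0,  0,  0,  0;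
     0, -c0, 0,  0,  0,  0,  0,  0;
     0,  0,  0,  0,  ch, 0,  0,  0]

def H2 (c0 ch : ℝ) : Matrix (Fin 8) (Fin 8) ℝ :=
  !![0,  0,  0,  0,  0,  0,  c0, 0;
     0,  0,  0,  ch, 0,  0,  0,  0;
     0,  0,  0,  0, -c0, 0,  0,  0;
     0,  ch, 0,  0,  0,  0,  0,  0;
     0,  0, -c0, 0,  0,  0,  0,  0;
     0,  0,  0,  0,  0,  0,  0,  ch;
     c0, 0,  0,  0,  0,  0,  0,  0;
     0,  0,  0,  0,  0,  ch, 0,  0]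

def H3 (c0 ch : ℝ) : Matrix (Fin 8) (Fin 8) ℝ :=
  !![0,  0,  0,  0,  0, -c0, 0,  0;
     0,  0,  0,  0,  c0, 0,  0,  0;
     0,  0,  0,  ch, 0,  0,  0,  0;
     0,  0,  ch, 0,  0,  0,  0,  0;
     0,  c0, 0,  0,  0,  0,  0,  0;
    -c0, 0,  0,  0,  0,  0,  0,  0;
     0,  0,  0,  0,  0,  0,  0,  ch;
     0,  0,  0,  0,  0,  0,  ch, 0]


section aux
variable {α : Type*} (v0 v1 v2 v3 v4 v5 v6 v7 : α)

@[simp] lemma vec8_0 : ![v0,v1,v2,v3,v4,v5,v6,v7] (0:Fin 8) = v0 := rfl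
@[simp] lemma vec8_1 : ![v0,v1,v2,v3,v4,v5,v6,v7] (1:Fin 8) = v1 := rfl
@[simp] lemma vec8_2 : ![v0,v1,v2,v3,v4,v5,v6,v7] (2:Fin 8) = v2 := rfl
@[simp] lemma vec8_3 : ![v0,v1,v2,v3,v4,v5,v6,v7] (3:Fin 8) = v3 := rfl
@[simp] lemma vec8_4 : ![v0,v1,v2,v3,v4,v5,v6,v7] (4:Fin 8) = v4 := rfl
@[simp] lemma vec8_5 : ![v0,v1,v2,v3,v4,v5,v6,v7] (5:Fin 8) = v5 := rfl
@[simp] lemma vec8_6 : ![v0,v1,v2,v3,v4,v5,v6,v7] (6:Fin 8) = v6 := rfl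
@[simp] lemma vec8_7 : ![v0,v1,v2,v3,v4,v5,v6,v7] (7:Fin 8) = v7 := rfl

@[simp] lemma vec8_mk0 (h : (0:ℕ) < 8) : ![v0,v1,v2,v3,v4,v5,v6,v7] (⟨0,h⟩ : Fin 8) = v0 := rfl
@[simp] lemma vec8_mk1 (h : (1:ℕ) < 8) : ![v0,v1,v2,v3,v4,v5,v6,v7] (⟨1,h⟩ : Fin 8) = v1 := rfl
@[simp] lemma vec8_mk2 (h : (2:ℕ) < 8) : ![v0,v1,v2,v3,v4,v5,v6,v7] (⟨2,h⟩ : Fin 8) = v2 := rfl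
@[simp] lemma vec8_mk3 (h : (3:ℕ) < 8) : ![v0,v1,v2,v3,v4,v5,v6,v7] (⟨3,h⟩ : Fin 8) = v3 := rfl
@[simp] lemma vec8_mk4 (h : (4:ℕ) < 8) : ![v0,v1,v2,v3,v4,v5,v6,v7] (⟨4,h⟩ : Fin 8) = v4 := rfl
@[simp] lemma vec8_mk5 (h : (5:ℕ) < 8) : ![v0,v1,v2,v3,v4,v5,v6,v7] (⟨5,h⟩ : Fin 8) = v5 := rfl
@[simp] lemma vec8_mk6 (h : (6:ℕ) < 8) : ![v0,v1,v2,v3,v4,v5,v6,v7] (⟨6,h⟩ : Fin 8) = v6 := rfl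
@[simp] lemma vec8_mk7 (h : (7:ℕ) < 8) : ![v0,v1,v2,v3,v4,v5,v6,v7] (⟨7,h⟩ : Fin 8) = v7 := rfl

@[simp] lemma fin8mk0 (h : (0:ℕ) < 8) : (⟨0,h⟩ : Fin 8) = (0 : Fin 8) := rfl
@[simp] lemma fin8mk1 (h : (1:ℕ) < 8) : (⟨1,h⟩ : Fin 8) = (1 : Fin 8) := rfl
@[simp] lemma fin8mk2 (h : (2:ℕ) < 8) : (⟨2,h⟩ : Fin 8) = (2 : Fin 8) := rfl
@[simp] lemma fin8mk3 (h : (3:ℕ) < 8) : (⟨3,h⟩ : Fin 8) = (3 : Fin 8) := rfl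
@[simp] lemma fin8mk4 (h : (4:ℕ) < 8) : (⟨4,h⟩ : Fin 8) = (4 : Fin 8) := rfl
@[simp] lemma fin8mk5 (h : (5:ℕ) < 8) : (⟨5,h⟩ : Fin 8) = (5 : Fin 8) := rfl
@[simp] lemma fin8mk6 (h : (6:ℕ) < 8) : (⟨6,h⟩ : Fin 8) = (6 : Fin 8) := rfl
@[simp] lemma fin8mk7 (h : (7:ℕ) < 8) : (⟨7,h⟩ : Fin 8) = (7 : Fin 8) := rfl

end aux

def A2ex (c0 ch n1 n2 n3 : ℝ) : Matrix (Fin 8) (Fin 8) ℝ :=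
  !![c0*c0*n2*n2 + c0*c0*n3*n3 + ch*ch*n1*n1, -c0*c0*n1*n2 + ch*ch*n1*n2, -c0*c0*n1*n3 + ch*ch*n1*n3, 0, 0, 0, 0, 0;
     -c0*c0*n1*n2 + ch*ch*n1*n2, c0*c0*n1*n1 + c0*c0*n3*n3 + ch*ch*n2*n2, -c0*c0*n2*n3 + ch*ch*n2*n3, 0, 0, 0, 0, 0;
     -c0*c0*n1*n3 + ch*ch*n1*n3, -c0*c0*n2*n3 + ch*ch*n2*n3, c0*c0*n1*n1 + c0*c0*n2*n2 + ch*ch*n3*n3, 0, 0, 0, 0, 0;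
     0, 0, 0, ch*ch*n1*n1 + ch*ch*n2*n2 + ch*ch*n3*n3, 0, 0, 0, 0;
     0, 0, 0, 0, c0*c0*n2*n2 + c0*c0*n3*n3 + ch*ch*n1*n1, -c0*c0*n1*n2 + ch*ch*n1*n2, -c0*c0*n1*n3 + ch*ch*n1*n3, 0;
     0, 0, 0, 0, -c0*c0*n1*n2 + ch*ch*n1*n2, c0*c0*n1*n1 + c0*c0*n3*n3 + ch*ch*n2*n2, -c0*c0*n2*n3 + ch*ch*n2*n3, 0;
     0, 0, 0, 0, -c0*c0*n1*n3 + ch*ch*n1*n3, -c0*c0*n2*n3 + ch*ch*n2*n3, c0*c0*n1*n1 + c0*c0*n2*n2 + ch*ch*n3*n3, 0;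
     0, 0, 0, 0, 0, 0, 0, ch*ch*n1*n1 + ch*ch*n2*n2 + ch*ch*n3*n3]

set_option maxHeartbeats 4000000 in
lemma maxwell_sq (c0 ch n1 n2 n3 : ℝ) :
    (n1 • H1 c0 ch + n2 • H2 c0 ch + n3 • H3 c0 ch) *
      (n1 • H1 c0 ch + n2 • H2 c0 ch + n3 • H3 c0 ch) = A2ex c0 ch n1 n2 n3 := by
  ext i j
  fin_cases i <;> fin_cases j <;>
    · simp only [H1, H2, H3, A2ex, Matrix.mul_apply, Fin.sum_univ_eight,
        Matrix.add_apply, Matrix.smul_apply, Matrix.of_apply,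
        vec8_0, vec8_1, vec8_2, vec8_3, vec8_4, vec8_5, vec8_6, vec8_7,
        vec8_mk0, vec8_mk1, vec8_mk2, vec8_mk3, vec8_mk4, vec8_mk5, vec8_mk6, vec8_mk7, smul_eq_mul]
      ring

set_option maxHeartbeats 4000000 in
lemma maxwell_key_identity (c0 ch n1 n2 n3 : ℝ) :
    letI A := n1 • H1 c0 ch + n2 • H2 c0 ch + n3 • H3 c0 ch
    (A * A - (((n1 ^ 2 + n2 ^ 2 + n3 ^ 2) * c0 ^ 2) • (1 : Matrix (Fin 8) (Fin 8) ℝ))) *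
      (A * A - (((n1 ^ 2 + n2 ^ 2 + n3 ^ 2) * ch ^ 2) • (1 : Matrix (Fin 8) (Fin 8) ℝ))) = 0 := by
  show _ = (0 : Matrix (Fin 8) (Fin 8) ℝ)
  rw [maxwell_sq]
  ext i j
  fin_cases i <;> fin_cases j <;>
    · simp only [A2ex, Matrix.mul_apply, Fin.sum_univ_eight, Matrix.sub_apply,
        Matrix.smul_apply, Matrix.of_apply, Matrix.one_apply, Matrix.zero_apply,
        vec8_0, vec8_1, vec8_2, vec8_3, vec8_4, vec8_5, vec8_6, vec8_7,
        vec8_mk0, vec8_mk1, vec8_mk2, vec8_mk3, vec8_mk4, vec8_mk5, vec8_mk6, vec8_mk7, smul_eq_mul]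
      try simp only [fin8mk0, fin8mk1, fin8mk2, fin8mk3, fin8mk4, fin8mk5, fin8mk6, fin8mk7, Fin.reduceEq, reduceIte, if_true, if_false]
      ring

set_option maxHeartbeats 2000000 in
/-- for any unit vector `n = (n₁,n₂,n₃)`, the matrix
`n₁H₁ + n₂H₂ + n₃H₃` is symmetric and all its (real) eigenvalues lie in
`{−c_h, −c₀, c₀, c_h}`. -/
theorem maxwell_glm_normal_matrix_symm_eigenvalues
    (c0 ch : ℝ) (hc0 : 0 < c0) (hch : 0 < ch)
    (n1 n2 n3 : ℝ) (hn : n1 ^ 2 + n2 ^ 2 + n3 ^ 2 = 1) :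
    (n1 • H1 c0 ch + n2 • H2 c0 ch + n3 • H3 c0 ch).IsSymm ∧
    ∀ (lam : ℝ) (v : Fin 8 → ℝ), v ≠ 0 →
      (n1 • H1 c0 ch + n2 • H2 c0 ch + n3 • H3 c0 ch).mulVec v = lam • v →
      lam = -ch ∨ lam = -c0 ∨ lam = c0 ∨ lam = ch := by
  set A := n1 • H1 c0 ch + n2 • H2 c0 ch + n3 • H3 c0 ch with hA
  constructor
  · rw [Matrix.IsSymm]
    ext i j
    fin_cases i <;> fin_cases j <;> rfl
  · intro lam v hv heig
    have key := maxwell_key_identity c0 ch n1 n2 n3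
    rw [hn, one_mul, one_mul] at key
    have h2 : (A * A).mulVec v = (lam ^ 2) • v := by
      rw [← Matrix.mulVec_mulVec, heig, Matrix.mulVec_smul, heig, smul_smul, sq]
    have hsub : ∀ (c : ℝ),
        (A * A - c • (1 : Matrix (Fin 8) (Fin 8) ℝ)).mulVec v = (lam ^ 2 - c) • v := by
      intro c
      rw [Matrix.sub_mulVec, Matrix.smul_mulVec, Matrix.one_mulVec, h2, sub_smul]
    have hM : ((A * A - (c0 ^ 2) • (1 : Matrix (Fin 8) (Fin 8) ℝ)) *
        (A * A - (ch ^ 2) • (1 : Matrix (Fin 8) (Fin 8) ℝ))).mulVec v = 0 := by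
      rw [key, Matrix.zero_mulVec]
    rw [← Matrix.mulVec_mulVec, hsub, Matrix.mulVec_smul, hsub, smul_smul] at hM
    have hscal : (lam ^ 2 - ch ^ 2) * (lam ^ 2 - c0 ^ 2) = 0 := by
      by_contra h
      exact hv (by simpa [h] using smul_eq_zero.mp hM)
    rcases mul_eq_zero.mp hscal with h | h
    · rcases sq_eq_sq_iff_eq_or_eq_neg.mp (sub_eq_zero.mp h) with h1 | h1
      · right; right; right; exact h1
      · left; simpa using h1
    · rcases sq_eq_sq_iff_eq_or_eq_neg.mp (sub_eq_zero.mp h) with h1 | h1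
      · right; right; left; exact h1
      · right; left; simpa using h1
end

section
/- Let 𝓔 : ℝ⁸ → ℝ be a smooth strictly convex energy function of the variables (B, φ, D, ψ) ∈ ℝ³ × ℝ × ℝ³ × ℝ. If (B, φ, D, ψ) is a smooth solution of the nonlinear SHTC system ∂ₜB_k + ε_{kij}∂_i 𝓔_{D_j} + ∂_k 𝓔_φ = 0, ∂ₜφ + ∂_k 𝓔_{B_k} = 0, ∂ₜD_k − ε_{kij}∂_i 𝓔_{B_j} + ∂_k 𝓔_ψ = 0, ∂ₜψ + ∂_k 𝓔_{D_k} = 0, then the extra conservation law ∂ₜ𝓔 + ∂_k(ε_{kij}𝓔_{D_i}𝓔_{B_j} + 𝓔_ψ 𝓔_{D_k} + 𝓔_φ 𝓔_{B_k}) = 0 holds. -/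
/-- Partial derivative of the energy `En : ℝ⁸ → ℝ` with respect to the
`m`-th state variable; the state is ordered as `(B₁,B₂,B₃,φ,D₁,D₂,D₃,ψ)`. -/
noncomputable def Ed (En : (Fin 8 → ℝ) → ℝ) (m : Fin 8) (q : Fin 8 → ℝ) : ℝ :=
  fderiv ℝ En q (Pi.single m 1)


section Helpers

lemma smooth4_diff_t {f : ℝ → ℝ → ℝ → ℝ → ℝ} (hf : Smooth4 f) (t x y z : ℝ) :
    DifferentiableAt ℝ (fun s => f s x y z) t := by
  have h : (fun s => f s x y z)
      = (fun p : ℝ × ℝ × ℝ × ℝ => f p.1 p.2.1 p.2.2.1 p.2.2.2) ∘ (fun s => (s, x, y, z)) := rfl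
  rw [h]
  exact ((hf.comp (contDiff_id.prodMk contDiff_const)).differentiable (by simp)) t

lemma smooth4_diff_x {f : ℝ → ℝ → ℝ → ℝ → ℝ} (hf : Smooth4 f) (t x y z : ℝ) :
    DifferentiableAt ℝ (fun s => f t s y z) x := by
  have h : (fun s => f t s y z)
      = (fun p : ℝ × ℝ × ℝ × ℝ => f p.1 p.2.1 p.2.2.1 p.2.2.2) ∘ (fun s => (t, s, y, z)) := rfl
  rw [h]
  exact ((hf.comp (contDiff_const.prodMk (contDiff_id.prodMk contDiff_const))).differentiable (by simp)) x

lemma smooth4_diff_y {f : ℝ → ℝ → ℝ → ℝ → ℝ} (hf : Smooth4 f) (t x y z : ℝ) :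
    DifferentiableAt ℝ (fun s => f t x s z) y := by
  have h : (fun s => f t x s z)
      = (fun p : ℝ × ℝ × ℝ × ℝ => f p.1 p.2.1 p.2.2.1 p.2.2.2)
        ∘ (fun s => (t, x, s, z)) := rfl
  rw [h]
  exact ((hf.comp (contDiff_const.prodMk (contDiff_const.prodMk
    (contDiff_id.prodMk contDiff_const)))).differentiable (by simp)) y

lemma smooth4_diff_z {f : ℝ → ℝ → ℝ → ℝ → ℝ} (hf : Smooth4 f) (t x y z : ℝ) :
    DifferentiableAt ℝ (fun s => f t x y s) z := by
  have h : (fun s => f t x y s)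
      = (fun p : ℝ × ℝ × ℝ × ℝ => f p.1 p.2.1 p.2.2.1 p.2.2.2)
        ∘ (fun s => (t, x, y, s)) := rfl
  rw [h]
  exact ((hf.comp (contDiff_const.prodMk (contDiff_const.prodMk
    (contDiff_const.prodMk contDiff_id)))).differentiable (by simp)) z

lemma contDiff_Ed {En : (Fin 8 → ℝ) → ℝ} (hEn : ContDiff ℝ (⊤ : ℕ∞) En) (m : Fin 8) :
    ContDiff ℝ (⊤ : ℕ∞) (Ed En m) := by
  have h1 : ContDiff ℝ (⊤ : ℕ∞) (fun q => fderiv ℝ En q) := hEn.fderiv_right (by simp)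
  exact h1.clm_apply contDiff_const

lemma fderiv_expand {En : (Fin 8 → ℝ) → ℝ} (q v : Fin 8 → ℝ) :
    fderiv ℝ En q v = ∑ m : Fin 8, v m * Ed En m q := by
  have hv : v = ∑ m : Fin 8, v m • (Pi.single m 1 : Fin 8 → ℝ) := by
    funext j
    simp [Finset.sum_apply, Pi.single_apply]
  conv_lhs => rw [hv]
  rw [map_sum]
  simp [Ed]

end Helpers

/-- extra conservation law for the nonlinear SHTC
(Maxwell-GLM type) system with smooth strictly convex energy `𝓔`. -/
theorem shtc_nonlinear_energy_conservation
    (En : (Fin 8 → ℝ) → ℝ) (hEn : ContDiff ℝ (⊤ : ℕ∞) En)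
    (hconv : StrictConvexOn ℝ Set.univ En)
    (B1 B2 B3 φ D1 D2 D3 ψ : ℝ → ℝ → ℝ → ℝ → ℝ)
    (hB1 : Smooth4 B1) (hB2 : Smooth4 B2) (hB3 : Smooth4 B3) (hφ : Smooth4 φ)
    (hD1 : Smooth4 D1) (hD2 : Smooth4 D2) (hD3 : Smooth4 D3) (hψ : Smooth4 ψ)
    -- the state vector q = (B,φ,D,ψ) and the dual (main field) variables p = ∂𝓔/∂q
    (st : ℝ → ℝ → ℝ → ℝ → (Fin 8 → ℝ))
    (hst : ∀ t x y z, st t x y z =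
      ![B1 t x y z, B2 t x y z, B3 t x y z, φ t x y z,
        D1 t x y z, D2 t x y z, D3 t x y z, ψ t x y z])
    (p : Fin 8 → ℝ → ℝ → ℝ → ℝ → ℝ)
    (hp : ∀ m t x y z, p m t x y z = Ed En m (st t x y z))
    -- ∂ₜB_k + ε_{kij}∂_i 𝓔_{D_j} + ∂_k 𝓔_φ = 0
    (eqB1 : ∀ t x y z, pt B1 t x y z + (py (p 6) t x y z - pz (p 5) t x y z)
        + px (p 3) t x y z = 0)
    (eqB2 : ∀ t x y z, pt B2 t x y z + (pz (p 4) t x y z - px (p 6) t x y z)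
        + py (p 3) t x y z = 0)
    (eqB3 : ∀ t x y z, pt B3 t x y z + (px (p 5) t x y z - py (p 4) t x y z)
        + pz (p 3) t x y z = 0)
    -- ∂ₜφ + ∂_k 𝓔_{B_k} = 0
    (eqφ : ∀ t x y z, pt φ t x y z
        + (px (p 0) t x y z + py (p 1) t x y z + pz (p 2) t x y z) = 0)
    -- ∂ₜD_k − ε_{kij}∂_i 𝓔_{B_j} + ∂_k 𝓔_ψ = 0
    (eqD1 : ∀ t x y z, pt D1 t x y z - (py (p 2) t x y z - pz (p 1) t x y z)
        + px (p 7) t x y z = 0)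
    (eqD2 : ∀ t x y z, pt D2 t x y z - (pz (p 0) t x y z - px (p 2) t x y z)
        + py (p 7) t x y z = 0)
    (eqD3 : ∀ t x y z, pt D3 t x y z - (px (p 1) t x y z - py (p 0) t x y z)
        + pz (p 7) t x y z = 0)
    -- ∂ₜψ + ∂_k 𝓔_{D_k} = 0
    (eqψ : ∀ t x y z, pt ψ t x y z
        + (px (p 4) t x y z + py (p 5) t x y z + pz (p 6) t x y z) = 0) :
    -- ∂ₜ𝓔 + ∂_k(ε_{kij}𝓔_{D_i}𝓔_{B_j} + 𝓔_ψ 𝓔_{D_k} + 𝓔_φ 𝓔_{B_k}) = 0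
    ∀ t x y z,
      pt (fun t x y z => En (st t x y z)) t x y z
      + px (fun t x y z => p 5 t x y z * p 2 t x y z - p 6 t x y z * p 1 t x y z
          + p 7 t x y z * p 4 t x y z + p 3 t x y z * p 0 t x y z) t x y z
      + py (fun t x y z => p 6 t x y z * p 0 t x y z - p 4 t x y z * p 2 t x y z
          + p 7 t x y z * p 5 t x y z + p 3 t x y z * p 1 t x y z) t x y z
      + pz (fun t x y z => p 4 t x y z * p 1 t x y z - p 5 t x y z * p 0 t x y z
          + p 7 t x y z * p 6 t x y z + p 3 t x y z * p 2 t x y z) t x y z = 0 := by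
  intro t x y z
  have hEd := contDiff_Ed hEn
  -- differentiability of the state curve in each spatial direction
  have hstx : DifferentiableAt ℝ (fun s => st t s y z) x := by
    have h : (fun s => st t s y z) = fun s =>
        ![B1 t s y z, B2 t s y z, B3 t s y z, φ t s y z,
          D1 t s y z, D2 t s y z, D3 t s y z, ψ t s y z] :=
      funext fun s => hst t s y z
    rw [h]
    apply differentiableAt_pi.2
    intro m
    fin_cases m <;> simp <;>
      first
        | exact smooth4_diff_x hB1 t x y z
        | exact smooth4_diff_x hB2 t x y z
        | exact smooth4_diff_x hB3 t x y z
        | exact smooth4_diff_x hφ t x y z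
        | exact smooth4_diff_x hD1 t x y z
        | exact smooth4_diff_x hD2 t x y z
        | exact smooth4_diff_x hD3 t x y z
        | exact smooth4_diff_x hψ t x y z
  have hsty : DifferentiableAt ℝ (fun s => st t x s z) y := by
    have h : (fun s => st t x s z) = fun s =>
        ![B1 t x s z, B2 t x s z, B3 t x s z, φ t x s z,
          D1 t x s z, D2 t x s z, D3 t x s z, ψ t x s z] :=
      funext fun s => hst t x s z
    rw [h]
    apply differentiableAt_pi.2
    intro m
    fin_cases m <;> simp <;>
      first
        | exact smooth4_diff_y hB1 t x y z
        | exact smooth4_diff_y hB2 t x y z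
        | exact smooth4_diff_y hB3 t x y z
        | exact smooth4_diff_y hφ t x y z
        | exact smooth4_diff_y hD1 t x y z
        | exact smooth4_diff_y hD2 t x y z
        | exact smooth4_diff_y hD3 t x y z
        | exact smooth4_diff_y hψ t x y z
  have hstz : DifferentiableAt ℝ (fun s => st t x y s) z := by
    have h : (fun s => st t x y s) = fun s =>
        ![B1 t x y s, B2 t x y s, B3 t x y s, φ t x y s,
          D1 t x y s, D2 t x y s, D3 t x y s, ψ t x y s] :=
      funext fun s => hst t x y s
    rw [h]
    apply differentiableAt_pi.2
    intro m
    fin_cases m <;> simp <;>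
      first
        | exact smooth4_diff_z hB1 t x y z
        | exact smooth4_diff_z hB2 t x y z
        | exact smooth4_diff_z hB3 t x y z
        | exact smooth4_diff_z hφ t x y z
        | exact smooth4_diff_z hD1 t x y z
        | exact smooth4_diff_z hD2 t x y z
        | exact smooth4_diff_z hD3 t x y z
        | exact smooth4_diff_z hψ t x y z
  -- spatial derivatives of the dual fields exist
  have hpx : ∀ m : Fin 8, HasDerivAt (fun s => p m t s y z) (px (p m) t x y z) x := by
    intro m
    have h : (fun s => p m t s y z) = fun s => Ed En m (st t s y z) :=
      funext fun s => hp m t s y z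
    have hd : DifferentiableAt ℝ (fun s => p m t s y z) x := by
      rw [h]
      exact (((hEd m).differentiable (by simp)) (st t x y z)).comp x hstx
    exact hd.hasDerivAt
  have hpy : ∀ m : Fin 8, HasDerivAt (fun s => p m t x s z) (py (p m) t x y z) y := by
    intro m
    have h : (fun s => p m t x s z) = fun s => Ed En m (st t x s z) :=
      funext fun s => hp m t x s z
    have hd : DifferentiableAt ℝ (fun s => p m t x s z) y := by
      rw [h]
      exact (((hEd m).differentiable (by simp)) (st t x y z)).comp y hsty
    exact hd.hasDerivAt
  have hpz : ∀ m : Fin 8, HasDerivAt (fun s => p m t x y s) (pz (p m) t x y z) z := by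
    intro m
    have h : (fun s => p m t x y s) = fun s => Ed En m (st t x y s) :=
      funext fun s => hp m t x y s
    have hd : DifferentiableAt ℝ (fun s => p m t x y s) z := by
      rw [h]
      exact (((hEd m).differentiable (by simp)) (st t x y z)).comp z hstz
    exact hd.hasDerivAt
  -- time derivative of the energy via the chain rule
  have hc : HasDerivAt (fun s => st s x y z)
      (![pt B1 t x y z, pt B2 t x y z, pt B3 t x y z, pt φ t x y z,
         pt D1 t x y z, pt D2 t x y z, pt D3 t x y z, pt ψ t x y z]) t := by
    have h : (fun s => st s x y z) = fun s =>
        ![B1 s x y z, B2 s x y z, B3 s x y z, φ s x y z,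
          D1 s x y z, D2 s x y z, D3 s x y z, ψ s x y z] :=
      funext fun s => hst s x y z
    rw [h]
    apply hasDerivAt_pi.2
    intro m
    fin_cases m <;> simp [pt] <;>
      first
        | exact smooth4_diff_t hB1 t x y z
        | exact smooth4_diff_t hB2 t x y z
        | exact smooth4_diff_t hB3 t x y z
        | exact smooth4_diff_t hφ t x y z
        | exact smooth4_diff_t hD1 t x y z
        | exact smooth4_diff_t hD2 t x y z
        | exact smooth4_diff_t hD3 t x y z
        | exact smooth4_diff_t hψ t x y z
        | exact (smooth4_diff_t hB1 t x y z).hasDerivAt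
        | exact (smooth4_diff_t hB2 t x y z).hasDerivAt
        | exact (smooth4_diff_t hB3 t x y z).hasDerivAt
        | exact (smooth4_diff_t hφ t x y z).hasDerivAt
        | exact (smooth4_diff_t hD1 t x y z).hasDerivAt
        | exact (smooth4_diff_t hD2 t x y z).hasDerivAt
        | exact (smooth4_diff_t hD3 t x y z).hasDerivAt
        | exact (smooth4_diff_t hψ t x y z).hasDerivAt
  have hEc : HasDerivAt (fun s => En (st s x y z))
      (fderiv ℝ En (st t x y z)
        (![pt B1 t x y z, pt B2 t x y z, pt B3 t x y z, pt φ t x y z,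
           pt D1 t x y z, pt D2 t x y z, pt D3 t x y z, pt ψ t x y z])) t :=
    ((hEn.differentiable (by simp) (st t x y z)).hasFDerivAt).comp_hasDerivAt t hc
  have hE : pt (fun t x y z => En (st t x y z)) t x y z =
      pt B1 t x y z * p 0 t x y z + pt B2 t x y z * p 1 t x y z
      + pt B3 t x y z * p 2 t x y z + pt φ t x y z * p 3 t x y z
      + pt D1 t x y z * p 4 t x y z + pt D2 t x y z * p 5 t x y z
      + pt D3 t x y z * p 6 t x y z + pt ψ t x y z * p 7 t x y z := by
    have h1 : pt (fun t x y z => En (st t x y z)) t x y z =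
        fderiv ℝ En (st t x y z)
          (![pt B1 t x y z, pt B2 t x y z, pt B3 t x y z, pt φ t x y z,
             pt D1 t x y z, pt D2 t x y z, pt D3 t x y z, pt ψ t x y z]) := hEc.deriv
    rw [h1, fderiv_expand]
    simp [Fin.sum_univ_eight, ← hp]
  -- spatial derivatives of the flux via the product rule
  have hX : px (fun t x y z => p 5 t x y z * p 2 t x y z - p 6 t x y z * p 1 t x y z
      + p 7 t x y z * p 4 t x y z + p 3 t x y z * p 0 t x y z) t x y z =
      (px (p 5) t x y z * p 2 t x y z + p 5 t x y z * px (p 2) t x y z)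
      - (px (p 6) t x y z * p 1 t x y z + p 6 t x y z * px (p 1) t x y z)
      + (px (p 7) t x y z * p 4 t x y z + p 7 t x y z * px (p 4) t x y z)
      + (px (p 3) t x y z * p 0 t x y z + p 3 t x y z * px (p 0) t x y z) :=
    (((((hpx 5).mul (hpx 2)).sub ((hpx 6).mul (hpx 1))).add
      ((hpx 7).mul (hpx 4))).add ((hpx 3).mul (hpx 0))).deriv
  have hY : py (fun t x y z => p 6 t x y z * p 0 t x y z - p 4 t x y z * p 2 t x y z
      + p 7 t x y z * p 5 t x y z + p 3 t x y z * p 1 t x y z) t x y z =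
      (py (p 6) t x y z * p 0 t x y z + p 6 t x y z * py (p 0) t x y z)
      - (py (p 4) t x y z * p 2 t x y z + p 4 t x y z * py (p 2) t x y z)
      + (py (p 7) t x y z * p 5 t x y z + p 7 t x y z * py (p 5) t x y z)
      + (py (p 3) t x y z * p 1 t x y z + p 3 t x y z * py (p 1) t x y z) :=
    (((((hpy 6).mul (hpy 0)).sub ((hpy 4).mul (hpy 2))).add
      ((hpy 7).mul (hpy 5))).add ((hpy 3).mul (hpy 1))).deriv
  have hZ : pz (fun t x y z => p 4 t x y z * p 1 t x y z - p 5 t x y z * p 0 t x y z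
      + p 7 t x y z * p 6 t x y z + p 3 t x y z * p 2 t x y z) t x y z =
      (pz (p 4) t x y z * p 1 t x y z + p 4 t x y z * pz (p 1) t x y z)
      - (pz (p 5) t x y z * p 0 t x y z + p 5 t x y z * pz (p 0) t x y z)
      + (pz (p 7) t x y z * p 6 t x y z + p 7 t x y z * pz (p 6) t x y z)
      + (pz (p 3) t x y z * p 2 t x y z + p 3 t x y z * pz (p 2) t x y z) :=
    (((((hpz 4).mul (hpz 1)).sub ((hpz 5).mul (hpz 0))).add
      ((hpz 7).mul (hpz 6))).add ((hpz 3).mul (hpz 2))).deriv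
  rw [hE, hX, hY, hZ]
  linear_combination
    p 0 t x y z * eqB1 t x y z + p 1 t x y z * eqB2 t x y z
    + p 2 t x y z * eqB3 t x y z + p 3 t x y z * eqφ t x y z
    + p 4 t x y z * eqD1 t x y z + p 5 t x y z * eqD2 t x y z
    + p 6 t x y z * eqD3 t x y z + p 7 t x y z * eqψ t x y z
end

section
/- Consider the quadratic energy 𝓔(D,B,φ,ψ) = ½(‖D‖²/ε + ‖B‖²/μ) + ½(α²φ² + β²ψ²) with α² = μ c_h², β² = ε c_h², c₀² = 1/(εμ). Under the rescaling B̂ = B, Ê = E/c₀ where E = 𝓔_D = D/ε, φ̂ = c_h μ φ, ψ̂ = (c_h/c₀)ψ, the nonlinear SHTC system ∂ₜB_k + ε_{kij}∂_i𝓔_{D_j} + ∂_k𝓔_φ = 0, ∂ₜφ + ∂_k𝓔_{B_k} = 0, ∂ₜD_k − ε_{kij}∂_i𝓔_{B_j} + ∂_k𝓔_ψ = 0, ∂ₜψ + ∂_k𝓔_{D_k} = 0 becomes exactly the linear Maxwell-GLM system ∂ₜB̂ + c₀∇×Ê + c_h∇φ̂ = 0, ∂ₜφ̂ + c_h∇·B̂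 = 0, ∂ₜÊ − c₀∇×B̂ + c_h∇ψ̂ = 0, ∂ₜψ̂ + c_h∇·Ê = 0. -/
section helpers
variable (c : ℝ) (f : ℝ → ℝ → ℝ → ℝ → ℝ) (t x y z : ℝ)

lemma pt_cm : pt (fun t x y z => c * f t x y z) t x y z = c * pt f t x y z := by
  simp [pt, deriv_const_mul_field]
lemma px_cm : px (fun t x y z => c * f t x y z) t x y z = c * px f t x y z := by
  simp [px, deriv_const_mul_field]
lemma py_cm : py (fun t x y z => c * f t x y z) t x y z = c * py f t x y z := by
  simp [py, deriv_const_mul_field]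
lemma pz_cm : pz (fun t x y z => c * f t x y z) t x y z = c * pz f t x y z := by
  simp [pz, deriv_const_mul_field]
lemma pt_dc : pt (fun t x y z => f t x y z / c) t x y z = pt f t x y z / c := by
  simp [pt, deriv_div_const]
lemma px_dc : px (fun t x y z => f t x y z / c) t x y z = px f t x y z / c := by
  simp [px, deriv_div_const]
lemma py_dc : py (fun t x y z => f t x y z / c) t x y z = py f t x y z / c := by
  simp [py, deriv_div_const]
lemma pz_dc : pz (fun t x y z => f t x y z / c) t x y z = pz f t x y z / c := by
  simp [pz, deriv_div_const]
end helpers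

/-- for the quadratic energy
`𝓔 = ½(‖D‖²/ε + ‖B‖²/μ) + ½(α²φ² + β²ψ²)` with `α² = μ c_h²`, `β² = ε c_h²`,
`c₀² = 1/(εμ)` (so that `𝓔_D = D/ε`, `𝓔_B = B/μ`, `𝓔_φ = α²φ`, `𝓔_ψ = β²ψ`),
the rescaled fields `B̂ = B`, `Ê = E/c₀ = D/(εc₀)`, `φ̂ = c_h μ φ`,
`ψ̂ = (c_h/c₀)ψ` satisfy the linear Maxwell-GLM system. -/
theorem shtc_quadratic_reduces_to_maxwell_glm
    (eps mu ch c0 : ℝ) (heps : 0 < eps) (hmu : 0 < mu) (hch : 0 < ch)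
    (hc0 : 0 < c0) (hc0sq : c0 ^ 2 = 1 / (eps * mu))
    (B1 B2 B3 φ D1 D2 D3 ψ : ℝ → ℝ → ℝ → ℝ → ℝ)
    (hB1 : Smooth4 B1) (hB2 : Smooth4 B2) (hB3 : Smooth4 B3) (hφ : Smooth4 φ)
    (hD1 : Smooth4 D1) (hD2 : Smooth4 D2) (hD3 : Smooth4 D3) (hψ : Smooth4 ψ)
    -- ∂ₜB_k + ε_{kij}∂_i(D_j/ε) + ∂_k(μ c_h² φ) = 0
    (eqB1 : ∀ t x y z, pt B1 t x y z
        + (py (fun t x y z => D3 t x y z / eps) t x y z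
           - pz (fun t x y z => D2 t x y z / eps) t x y z)
        + px (fun t x y z => mu * ch ^ 2 * φ t x y z) t x y z = 0)
    (eqB2 : ∀ t x y z, pt B2 t x y z
        + (pz (fun t x y z => D1 t x y z / eps) t x y z
           - px (fun t x y z => D3 t x y z / eps) t x y z)
        + py (fun t x y z => mu * ch ^ 2 * φ t x y z) t x y z = 0)
    (eqB3 : ∀ t x y z, pt B3 t x y z
        + (px (fun t x y z => D2 t x y z / eps) t x y z
           - py (fun t x y z => D1 t x y z / eps) t x y z)
        + pz (fun t x y z => mu * ch ^ 2 * φ t x y z) t x y z = 0)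
    -- ∂ₜφ + ∂_k(B_k/μ) = 0
    (eqφ : ∀ t x y z, pt φ t x y z
        + (px (fun t x y z => B1 t x y z / mu) t x y z
           + py (fun t x y z => B2 t x y z / mu) t x y z
           + pz (fun t x y z => B3 t x y z / mu) t x y z) = 0)
    -- ∂ₜD_k − ε_{kij}∂_i(B_j/μ) + ∂_k(ε c_h² ψ) = 0
    (eqD1 : ∀ t x y z, pt D1 t x y z
        - (py (fun t x y z => B3 t x y z / mu) t x y z
           - pz (fun t x y z => B2 t x y z / mu) t x y z)
        + px (fun t x y z => eps * ch ^ 2 * ψ t x y z) t x y z = 0)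
    (eqD2 : ∀ t x y z, pt D2 t x y z
        - (pz (fun t x y z => B1 t x y z / mu) t x y z
           - px (fun t x y z => B3 t x y z / mu) t x y z)
        + py (fun t x y z => eps * ch ^ 2 * ψ t x y z) t x y z = 0)
    (eqD3 : ∀ t x y z, pt D3 t x y z
        - (px (fun t x y z => B2 t x y z / mu) t x y z
           - py (fun t x y z => B1 t x y z / mu) t x y z)
        + pz (fun t x y z => eps * ch ^ 2 * ψ t x y z) t x y z = 0)
    -- ∂ₜψ + ∂_k(D_k/ε) = 0
    (eqψ : ∀ t x y z, pt ψ t x y z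
        + (px (fun t x y z => D1 t x y z / eps) t x y z
           + py (fun t x y z => D2 t x y z / eps) t x y z
           + pz (fun t x y z => D3 t x y z / eps) t x y z) = 0)
    -- rescaled fields
    (Bh1 Bh2 Bh3 Eh1 Eh2 Eh3 φh ψh : ℝ → ℝ → ℝ → ℝ → ℝ)
    (hBh1 : ∀ t x y z, Bh1 t x y z = B1 t x y z)
    (hBh2 : ∀ t x y z, Bh2 t x y z = B2 t x y z)
    (hBh3 : ∀ t x y z, Bh3 t x y z = B3 t x y z)
    (hEh1 : ∀ t x y z, Eh1 t x y z = (1 / c0) * (D1 t x y z / eps))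
    (hEh2 : ∀ t x y z, Eh2 t x y z = (1 / c0) * (D2 t x y z / eps))
    (hEh3 : ∀ t x y z, Eh3 t x y z = (1 / c0) * (D3 t x y z / eps))
    (hφh : ∀ t x y z, φh t x y z = ch * mu * φ t x y z)
    (hψh : ∀ t x y z, ψh t x y z = (ch / c0) * ψ t x y z) :
    -- the rescaled fields solve the linear Maxwell-GLM system
    (∀ t x y z, pt Bh1 t x y z + c0 * (py Eh3 t x y z - pz Eh2 t x y z)
        + ch * px φh t x y z = 0) ∧
    (∀ t x y z, pt Bh2 t x y z + c0 * (pz Eh1 t x y z - px Eh3 t x y z)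
        + ch * py φh t x y z = 0) ∧
    (∀ t x y z, pt Bh3 t x y z + c0 * (px Eh2 t x y z - py Eh1 t x y z)
        + ch * pz φh t x y z = 0) ∧
    (∀ t x y z, pt φh t x y z
        + ch * (px Bh1 t x y z + py Bh2 t x y z + pz Bh3 t x y z) = 0) ∧
    (∀ t x y z, pt Eh1 t x y z - c0 * (py Bh3 t x y z - pz Bh2 t x y z)
        + ch * px ψh t x y z = 0) ∧
    (∀ t x y z, pt Eh2 t x y z - c0 * (pz Bh1 t x y z - px Bh3 t x y z)
        + ch * py ψh t x y z = 0) ∧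
    (∀ t x y z, pt Eh3 t x y z - c0 * (px Bh2 t x y z - py Bh1 t x y z)
        + ch * pz ψh t x y z = 0) ∧
    (∀ t x y z, pt ψh t x y z
        + ch * (px Eh1 t x y z + py Eh2 t x y z + pz Eh3 t x y z) = 0) := by
  
  have heps' : eps ≠ 0 := ne_of_gt heps
  have hmu' : mu ≠ 0 := ne_of_gt hmu
  have hc0' : c0 ≠ 0 := ne_of_gt hc0
  have hBh1' : Bh1 = B1 := funext fun t => funext fun x => funext fun y => funext fun z => hBh1 t x y z
  have hBh2' : Bh2 = B2 := funext fun t => funext fun x => funext fun y => funext fun z => hBh2 t x y z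
  have hBh3' : Bh3 = B3 := funext fun t => funext fun x => funext fun y => funext fun z => hBh3 t x y z
  have hEh1' : Eh1 = fun t x y z => (1 / c0) * (D1 t x y z / eps) := funext fun t => funext fun x => funext fun y => funext fun z => hEh1 t x y z
  have hEh2' : Eh2 = fun t x y z => (1 / c0) * (D2 t x y z / eps) := funext fun t => funext fun x => funext fun y => funext fun z => hEh2 t x y z
  have hEh3' : Eh3 = fun t x y z => (1 / c0) * (D3 t x y z / eps) := funext fun t => funext fun x => funext fun y => funext fun z => hEh3 t x y z
  have hφh' : φh = fun t x y z => ch * mu * φ t x y z := funext fun t => funext fun x => funext fun y => funext fun z => hφh t x y z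
  have hψh' : ψh = fun t x y z => ch / c0 * ψ t x y z := funext fun t => funext fun x => funext fun y => funext fun z => hψh t x y z
  subst hBh1' hBh2' hBh3' hEh1' hEh2' hEh3' hφh' hψh'
  have hpol : c0 ^ 2 * (eps * mu) = 1 := by rw [hc0sq]; field_simp
  have hinv : 1 / c0 = c0 * (eps * mu) := by
    rw [eq_comm, eq_div_iff hc0']; linear_combination hpol
  have hchc : ch / c0 = ch * (c0 * (eps * mu)) := by
    rw [div_eq_iff hc0']; linear_combination (-ch) * hpol
  refine ⟨fun t x y z => ?_, fun t x y z => ?_, fun t x y z => ?_, fun t x y z => ?_,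
    fun t x y z => ?_, fun t x y z => ?_, fun t x y z => ?_, fun t x y z => ?_⟩
  · have h := eqB1 t x y z
    simp only [pt_cm, px_cm, py_cm, pz_cm, pt_dc, px_dc, py_dc, pz_dc] at h ⊢
    field_simp at h ⊢; linear_combination h
  · have h := eqB2 t x y z
    simp only [pt_cm, px_cm, py_cm, pz_cm, pt_dc, px_dc, py_dc, pz_dc] at h ⊢
    field_simp at h ⊢; linear_combination h
  · have h := eqB3 t x y z
    simp only [pt_cm, px_cm, py_cm, pz_cm, pt_dc, px_dc, py_dc, pz_dc] at h ⊢
    field_simp at h ⊢; linear_combination h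
  · have h := eqφ t x y z
    simp only [pt_cm, px_cm, py_cm, pz_cm, pt_dc, px_dc, py_dc, pz_dc] at h ⊢
    field_simp at h ⊢; linear_combination ch * h
  · have h := eqD1 t x y z
    simp only [pt_cm, px_cm, py_cm, pz_cm, pt_dc, px_dc, py_dc, pz_dc] at h ⊢
    rw [hinv, hchc]
    field_simp at h ⊢; linear_combination c0 * h
  · have h := eqD2 t x y z
    simp only [pt_cm, px_cm, py_cm, pz_cm, pt_dc, px_dc, py_dc, pz_dc] at h ⊢
    rw [hinv, hchc]
    field_simp at h ⊢; linear_combination c0 * h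
  · have h := eqD3 t x y z
    simp only [pt_cm, px_cm, py_cm, pz_cm, pt_dc, px_dc, py_dc, pz_dc] at h ⊢
    rw [hinv, hchc]
    field_simp at h ⊢; linear_combination c0 * h
  · have h := eqψ t x y z
    simp only [pt_cm, px_cm, py_cm, pz_cm, pt_dc, px_dc, py_dc, pz_dc] at h ⊢
    field_simp at h ⊢; linear_combination ch * h
end

section
/- Consider the semi-discrete finite volume scheme dq^ℓ/dt = −Σ_{r∈N(ℓ)} (|∂Ω^{ℓr}|/|Ω^ℓ|) f^{ℓr} on a mesh with closed cells (so that Σ_r |∂Ω^{ℓr}| n^{ℓr} = 0 for each cell ℓ), with conservative anti-symmetric numerical fluxes f^{ℓr} = −f^{rℓ}. If the numerical flux satisfies the discrete compatibility condition p^ℓ·(f^{ℓr} − f_k^ℓ n_k^{ℓr}) + p^r·(f_k^r n_k^{ℓr} − f^{ℓr}) = (F_k^r − F_k^ℓ) n_k^{ℓr}, where p^ℓ = ∂𝓔/∂q evaluated at q^ℓ, then the total discrete energy Σ_ℓ |Ω^ℓ| 𝓔(q^ℓ) is constant in time (for periodic/vanishing boundary fluxes). -/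
open Finset

/-- Euclidean dot product on `ℝ^m`. -/
def dotm {m : ℕ} (u v : Fin m → ℝ) : ℝ := ∑ i, u i * v i

lemma dotm_clm {m : ℕ} (L : (Fin m → ℝ) →L[ℝ] ℝ) (v : Fin m → ℝ) :
    L v = dotm (fun i => L (Pi.single i 1)) v := by
  have hv : v = ∑ i, v i • (Pi.single i 1 : Fin m → ℝ) := by
    funext j
    simp [Finset.sum_apply, Pi.single_apply]
  calc L v = L (∑ i, v i • (Pi.single i 1 : Fin m → ℝ)) := by rw [← hv]
    _ = ∑ i, v i * L (Pi.single i 1) := by rw [map_sum]; simp [smul_eq_mul]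
    _ = dotm (fun i => L (Pi.single i 1)) v := by simp [dotm, mul_comm]

lemma dotm_sub {m : ℕ} (u a b : Fin m → ℝ) :
    dotm u (a - b) = dotm u a - dotm u b := by
  simp [dotm, mul_sub, Finset.sum_sub_distrib]

lemma dotm_neg {m : ℕ} (u a : Fin m → ℝ) : dotm u (-a) = -dotm u a := by
  simp [dotm, Finset.sum_neg_distrib]

lemma dotm_neg_sum {ι : Type*} {m : ℕ} (u : Fin m → ℝ) (S : Finset ι)
    (c : ι → ℝ) (w : ι → Fin m → ℝ) :
    dotm u (-∑ r ∈ S, c r • w r) = -∑ r ∈ S, c r * dotm u (w r) := by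
  rw [dotm_neg]
  congr 1
  simp only [dotm, Finset.sum_apply, Pi.smul_apply, smul_eq_mul, Finset.mul_sum]
  rw [Finset.sum_comm]
  apply Finset.sum_congr rfl
  intro r _
  apply Finset.sum_congr rfl
  intro i _
  ring

/-- the semi-discrete finite volume scheme with a numerical flux
satisfying the discrete compatibility condition conserves the total discrete
energy `Σ_ℓ |Ω^ℓ| 𝓔(q^ℓ)` exactly. -/
theorem semidiscrete_fv_energy_conservation
    {ι : Type*} [Fintype ι] {m : ℕ}
    -- energy and its flux, with the dual variable p = ∂𝓔/∂q
    (En : (Fin m → ℝ) → ℝ) (hEn : ContDiff ℝ (⊤ : ℕ∞) En)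
    (fk : (Fin m → ℝ) → Fin 3 → (Fin m → ℝ))  -- physical fluxes f_k(q)
    (Fk : (Fin m → ℝ) → Fin 3 → ℝ)            -- energy fluxes F_k(q)
    -- mesh data: neighbors, volumes, interface areas, unit normals
    (N : ι → Finset ι) (vol : ι → ℝ) (area : ι → ι → ℝ) (nrm : ι → ι → Fin 3 → ℝ)
    (hvol : ∀ l, 0 < vol l) (harea : ∀ l r, area l r = area r l)
    (hNsymm : ∀ l r, r ∈ N l ↔ l ∈ N r)
    (hnrm : ∀ l r, nrm r l = -nrm l r)
    -- closed cells: Σ_r |∂Ω^{ℓr}| n^{ℓr} = 0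
    (hclosed : ∀ l, ∑ r ∈ N l, area l r • nrm l r = 0)
    -- discrete solution and (possibly time-dependent) numerical fluxes
    (q : ℝ → ι → (Fin m → ℝ))
    (fnum : ℝ → ι → ι → (Fin m → ℝ))
    -- conservative anti-symmetric numerical flux
    (hfanti : ∀ t l r, fnum t r l = -fnum t l r)
    -- the semi-discrete scheme dq^ℓ/dt = −Σ_r (|∂Ω^{ℓr}|/|Ω^ℓ|) f^{ℓr}
    (hscheme : ∀ t l, HasDerivAt (fun s => q s l)
      (-∑ r ∈ N l, (area l r / vol l) • fnum t l r) t)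
    -- discrete compatibility condition, with p^ℓ = ∂𝓔/∂q at q^ℓ
    (hcompat : ∀ t l r, r ∈ N l →
      dotm (fun i => fderiv ℝ En (q t l) (Pi.single i 1))
        (fnum t l r - fun i => ∑ k, fk (q t l) k i * nrm l r k)
      + dotm (fun i => fderiv ℝ En (q t r) (Pi.single i 1))
        ((fun i => ∑ k, fk (q t r) k i * nrm l r k) - fnum t l r)
      = ∑ k, (Fk (q t r) k - Fk (q t l) k) * nrm l r k) :
    -- total discrete energy is constant in time
    ∀ t : ℝ, HasDerivAt (fun s => ∑ l, vol l * En (q s l)) 0 t := by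
  intro t
  set p : ι → Fin m → ℝ := fun l i => fderiv ℝ En (q t l) (Pi.single i 1) with hp
  -- swap lemma for double sums over the neighbor structure
  have hswap : ∀ (φ : ι → ι → ℝ),
      (∑ l, ∑ r ∈ N l, φ l r) = ∑ l, ∑ r ∈ N l, φ r l := by
    intro φ
    exact Finset.sum_comm' (fun x y => by simp [hNsymm x y])
  -- closed-cell lemmas
  have hc : ∀ l k, (∑ r ∈ N l, area l r * nrm l r k) = 0 := by
    intro l k
    have := congrFun (hclosed l) k
    simpa [Finset.sum_apply] using this
  have hL1 : ∀ (w : ι → Fin 3 → ℝ),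
      (∑ l, ∑ r ∈ N l, area l r * ∑ k, w l k * nrm l r k) = 0 := by
    intro w
    apply Finset.sum_eq_zero
    intro l _
    have : ∀ r ∈ N l, area l r * ∑ k, w l k * nrm l r k
        = ∑ k, w l k * (area l r * nrm l r k) := by
      intro r _
      rw [Finset.mul_sum]
      exact Finset.sum_congr rfl fun i _ => by ring
    rw [Finset.sum_congr rfl this, Finset.sum_comm]
    apply Finset.sum_eq_zero
    intro k _
    rw [← Finset.mul_sum, hc l k, mul_zero]
  have hL2 : ∀ (w : ι → Fin 3 → ℝ),
      (∑ l, ∑ r ∈ N l, area l r * ∑ k, w r k * nrm l r k) = 0 := by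
    intro w
    rw [hswap]
    have : ∀ l, ∀ r ∈ N l, area r l * ∑ k, w l k * nrm r l k
        = -(area l r * ∑ k, w l k * nrm l r k) := by
      intro l r _
      rw [← harea, hnrm]
      simp [mul_neg, Finset.sum_neg_distrib]
    calc (∑ l, ∑ r ∈ N l, area r l * ∑ k, w l k * nrm r l k)
        = ∑ l, ∑ r ∈ N l, -(area l r * ∑ k, w l k * nrm l r k) :=
          Finset.sum_congr rfl fun l _ => Finset.sum_congr rfl (this l)
      _ = -(∑ l, ∑ r ∈ N l, area l r * ∑ k, w l k * nrm l r k) := by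
          simp [Finset.sum_neg_distrib]
      _ = 0 := by rw [hL1 w, neg_zero]
  -- the derivative of each cell energy
  have hdiff : Differentiable ℝ En := hEn.differentiable (by simp)
  have hd : ∀ l, HasDerivAt (fun s => En (q s l))
      (-∑ r ∈ N l, (area l r / vol l) * dotm (p l) (fnum t l r)) t := by
    intro l
    have h1 := (hdiff (q t l)).hasFDerivAt.comp_hasDerivAt t (hscheme t l)
    have h2 : (fderiv ℝ En (q t l)) (-∑ r ∈ N l, (area l r / vol l) • fnum t l r)
        = -∑ r ∈ N l, (area l r / vol l) * dotm (p l) (fnum t l r) := by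
      rw [dotm_clm, hp, dotm_neg_sum]
    rw [h2] at h1
    exact h1
  have hsum : HasDerivAt (fun s => ∑ l, vol l * En (q s l))
      (∑ l, vol l * (-∑ r ∈ N l, (area l r / vol l) * dotm (p l) (fnum t l r))) t :=
    HasDerivAt.fun_sum fun l _ => (hd l).const_mul (vol l)
  -- simplify the derivative value
  have hval : (∑ l, vol l * (-∑ r ∈ N l, (area l r / vol l) * dotm (p l) (fnum t l r)))
      = -∑ l, ∑ r ∈ N l, area l r * dotm (p l) (fnum t l r) := by
    rw [← Finset.sum_neg_distrib]
    apply Finset.sum_congr rfl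
    intro l _
    rw [mul_neg, Finset.mul_sum]
    congr 1
    apply Finset.sum_congr rfl
    intro r _
    have hne := (hvol l).ne'
    field_simp
  -- the main cancellation: A = 0
  set A : ℝ := ∑ l, ∑ r ∈ N l, area l r * dotm (p l) (fnum t l r) with hA
  have h2A : A + A = 0 := by
    have hA2 : A = ∑ l, ∑ r ∈ N l, -(area l r * dotm (p r) (fnum t l r)) := by
      rw [hA, hswap (fun l r => area l r * dotm (p l) (fnum t l r))]
      apply Finset.sum_congr rfl
      intro l _
      apply Finset.sum_congr rfl
      intro r _
      rw [← harea, hfanti, dotm_neg]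
      ring
    have hcomb : A + A
        = ∑ l, ∑ r ∈ N l, (area l r * dotm (p l) (fnum t l r)
            + -(area l r * dotm (p r) (fnum t l r))) := by
      nth_rewrite 2 [hA2]
      rw [hA, ← Finset.sum_add_distrib]
      apply Finset.sum_congr rfl
      intro l _
      rw [← Finset.sum_add_distrib]
    rw [hcomb]
    -- use the compatibility condition on each interior face
    have hterm : ∀ l, ∀ r ∈ N l,
        area l r * dotm (p l) (fnum t l r) + -(area l r * dotm (p r) (fnum t l r))
        = area l r * ∑ k, Fk (q t r) k * nrm l r k
          - area l r * ∑ k, Fk (q t l) k * nrm l r k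
          + area l r * ∑ k, dotm (p l) (fk (q t l) k) * nrm l r k
          - area l r * ∑ k, dotm (p r) (fk (q t r) k) * nrm l r k := by
      intro l r hr
      have hcpt := hcompat t l r hr
      rw [dotm_sub, dotm_sub] at hcpt
      have hGl : dotm (p l) (fun i => ∑ k, fk (q t l) k i * nrm l r k)
          = ∑ k, dotm (p l) (fk (q t l) k) * nrm l r k := by
        simp only [dotm, Finset.sum_mul, Finset.mul_sum]
        rw [Finset.sum_comm]
        exact Finset.sum_congr rfl fun k _ => Finset.sum_congr rfl fun i _ => by ring
      have hGr : dotm (p r) (fun i => ∑ k, fk (q t r) k i * nrm l r k)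
          = ∑ k, dotm (p r) (fk (q t r) k) * nrm l r k := by
        simp only [dotm, Finset.sum_mul, Finset.mul_sum]
        rw [Finset.sum_comm]
        exact Finset.sum_congr rfl fun k _ => Finset.sum_congr rfl fun i _ => by ring
      have hFs : (∑ k, (Fk (q t r) k - Fk (q t l) k) * nrm l r k)
          = (∑ k, Fk (q t r) k * nrm l r k) - ∑ k, Fk (q t l) k * nrm l r k := by
        rw [← Finset.sum_sub_distrib]
        exact Finset.sum_congr rfl fun k _ => by ring
      have hpl : ∀ a, (fun i => fderiv ℝ En (q t a) (Pi.single i 1)) = p a := fun a => rfl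
      rw [hpl l, hpl r, hGl, hGr, hFs] at hcpt
      have key : dotm (p l) (fnum t l r) - dotm (p r) (fnum t l r)
          = ((∑ k, Fk (q t r) k * nrm l r k) - ∑ k, Fk (q t l) k * nrm l r k)
            + (∑ k, dotm (p l) (fk (q t l) k) * nrm l r k)
            - ∑ k, dotm (p r) (fk (q t r) k) * nrm l r k := by
        linarith [hcpt]
      have := congrArg (fun x => area l r * x) key
      simp only [mul_sub, mul_add] at this
      linarith [this]
    calc (∑ l, ∑ r ∈ N l, (area l r * dotm (p l) (fnum t l r)
            + -(area l r * dotm (p r) (fnum t l r))))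
        = ∑ l, ∑ r ∈ N l, (area l r * ∑ k, Fk (q t r) k * nrm l r k
            - area l r * ∑ k, Fk (q t l) k * nrm l r k
            + area l r * ∑ k, dotm (p l) (fk (q t l) k) * nrm l r k
            - area l r * ∑ k, dotm (p r) (fk (q t r) k) * nrm l r k) :=
          Finset.sum_congr rfl fun l _ => Finset.sum_congr rfl (hterm l)
      _ = (∑ l, ∑ r ∈ N l, area l r * ∑ k, Fk (q t r) k * nrm l r k)
            - (∑ l, ∑ r ∈ N l, area l r * ∑ k, Fk (q t l) k * nrm l r k)
            + (∑ l, ∑ r ∈ N l, area l r * ∑ k, dotm (p l) (fk (q t l) k) * nrm l r k)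
            - ∑ l, ∑ r ∈ N l, area l r * ∑ k, dotm (p r) (fk (q t r) k) * nrm l r k := by
          simp [Finset.sum_add_distrib, Finset.sum_sub_distrib]
      _ = 0 := by
          rw [hL2 (fun l k => Fk (q t l) k), hL1 (fun l k => Fk (q t l) k),
            hL1 (fun l k => dotm (p l) (fk (q t l) k)),
            hL2 (fun l k => dotm (p l) (fk (q t l) k))]
          ring
  have hA0 : A = 0 := by linarith
  rw [hval] at hsum
  rw [hA0, neg_zero] at hsum
  exact hsum
end

section
/- The Abgrall-type numerical flux f^{ℓr} = ½(f_k^ℓ + f_k^r) n_k^{ℓr} − α^{ℓr}(p^r − p^ℓ) with α^{ℓr} = [ (F_k^r − F_k^ℓ) n_k^{ℓr} + ½(p^r + p^ℓ)·(f_k^ℓ − f_k^r) n_k^{ℓr} ] / ‖p^r − p^ℓ‖² satisfies the discrete compatibility condition p^ℓ·(f^{ℓr} − f_k^ℓ n_k^{ℓr}) + p^r·(f_k^r n_k^{ℓr} − f^{ℓr}) = (F_k^r − F_k^ℓ) n_k^{ℓr}, provided p^r ≠ p^ℓ. -/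
open Finset

lemma dotm_sub_right {m : ℕ} (u v w : Fin m → ℝ) :
    dotm u (v - w) = dotm u v - dotm u w := by
  simp [dotm, mul_sub, Finset.sum_sub_distrib]

lemma dotm_add_right {m : ℕ} (u v w : Fin m → ℝ) :
    dotm u (v + w) = dotm u v + dotm u w := by
  simp [dotm, mul_add, Finset.sum_add_distrib]

lemma dotm_sub_left {m : ℕ} (u v w : Fin m → ℝ) :
    dotm (u - v) w = dotm u w - dotm v w := by
  simp [dotm, sub_mul, Finset.sum_sub_distrib]

lemma dotm_add_left {m : ℕ} (u v w : Fin m → ℝ) :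
    dotm (u + v) w = dotm u w + dotm v w := by
  simp [dotm, add_mul, Finset.sum_add_distrib]

lemma dotm_smul_right {m : ℕ} (c : ℝ) (u v : Fin m → ℝ) :
    dotm u (c • v) = c * dotm u v := by
  simp [dotm, Finset.mul_sum, smul_eq_mul, mul_left_comm]

/-- the thermodynamically compatible Abgrall-type flux
`f^{ℓr} = ½(f_k^ℓ + f_k^r)n_k − α^{ℓr}(p^r − p^ℓ)` with the scalar correction
factor `α^{ℓr}` satisfies, whenever `p^r ≠ p^ℓ`, the discrete compatibility
condition `p^ℓ·(f^{ℓr} − f_k^ℓ n_k) + p^r·(f_k^r n_k − f^{ℓr}) = (F_k^r − F_k^ℓ)n_k`. -/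
theorem abgrall_flux_compatibility
    {m : ℕ}
    (pl pr : Fin m → ℝ) (hne : pr ≠ pl)
    (fl fr : Fin 3 → (Fin m → ℝ)) (Fl Fr : Fin 3 → ℝ) (n : Fin 3 → ℝ)
    (alpha : ℝ)
    (halpha : alpha =
      ((∑ k, (Fr k - Fl k) * n k)
        + (1/2) * dotm (pr + pl) (fun i => ∑ k, (fl k i - fr k i) * n k))
      / dotm (pr - pl) (pr - pl))
    (fnum : Fin m → ℝ)
    (hfnum : fnum = (fun i => (1/2) * ∑ k, (fl k i + fr k i) * n k)
      - alpha • (pr - pl)) :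
    dotm pl (fnum - fun i => ∑ k, fl k i * n k)
    + dotm pr ((fun i => ∑ k, fr k i * n k) - fnum)
    = ∑ k, (Fr k - Fl k) * n k := by
  set g : Fin m → ℝ := fun i => ∑ k, fl k i * n k with hg
  set h : Fin m → ℝ := fun i => ∑ k, fr k i * n k with hh
  have hE : dotm (pr - pl) (pr - pl) ≠ 0 := by
    intro h0
    apply hne
    have hnn : ∀ i ∈ Finset.univ, (0:ℝ) ≤ (pr - pl) i * (pr - pl) i :=
      fun i _ => mul_self_nonneg _
    have hz := (Finset.sum_eq_zero_iff_of_nonneg hnn).1 h0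
    funext i
    have hi := hz i (Finset.mem_univ i)
    have : (pr - pl) i = 0 := by nlinarith [hi]
    simpa [sub_eq_zero] using this
  have h1 : (fun i => (1/2 : ℝ) * ∑ k, (fl k i + fr k i) * n k)
      = (1/2 : ℝ) • (g + h) := by
    funext i
    simp [hg, hh, add_mul, Finset.sum_add_distrib]
  have h2 : (fun i => ∑ k, (fl k i - fr k i) * n k) = g - h := by
    funext i
    simp [hg, hh, sub_mul, Finset.sum_sub_distrib]
  rw [h2] at halpha
  rw [h1] at hfnum
  subst hfnum
  rw [dotm_sub_right, dotm_sub_right, dotm_sub_right, dotm_sub_right,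
    dotm_smul_right, dotm_smul_right, dotm_smul_right, dotm_add_right,
    dotm_add_right]
  have hE' : dotm pr (pr - pl) - dotm pl (pr - pl) = dotm (pr - pl) (pr - pl) := by
    rw [dotm_sub_left]
  rw [dotm_add_left, dotm_sub_right, dotm_sub_right] at halpha
  rw [halpha]
  have hEpr : dotm pr (pr - pl) = dotm (pr - pl) (pr - pl) + dotm pl (pr - pl) := by
    linarith [hE']
  rw [dotm_smul_right, hEpr]
  field_simp
  ring
end
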